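/- Let $n\ge 2$, $\lambda>1/2$, $\beta\ge 0$, $\gamma>0$, $T>0$, and $k\ge e^{(n)}$ sufficiently large depending on $(n,\lambda,\gamma)$. With $\varphi(s,x)=(k+x)[1-(\ln^{(n)}(k+x))^{1-2\lambda}]\exp[2(\beta+\frac{2\gamma^2}{2\lambda-1})s]$, the following inequality holds for all $(s,x)\in[0,T]\times[0,\infty)$ and all $z\in\mathbb{R}^{1\times d}$: $-\beta\,\varphi_x(s,x)\,x - \varphi_x(s,x)\frac{\gamma|z|}{\mathcal{IL}_{n,k}^\lambda(|z|)} + \tfrac12\varphi_{xx}(s,x)|z|^2 + \varphi_s(s,x) \ge 0$. -/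

import Mathlib

set_option maxHeartbeats 1000000


open Real Finset

/-- `iterLog n x` is the `n`-fold iterated logarithm `ln^{(n)}(x)` (with `iterLog 0 x = x`). -/
noncomputable def iterLog : ℕ → ℝ → ℝ
  | 0, x => x
  | n + 1, x => Real.log (iterLog n x)

/-- `iterExp n` is the exponential tower `e^{(n)}`, with `e^{(1)} = e`. -/
noncomputable def iterExp : ℕ → ℝ
  | 0 => 1
  | n + 1 => Real.exp (iterExp n)

/-- `IL n k lam x = ∏_{i=1}^{n-1} √(ln^{(i)}(k+x)) · (ln^{(n)}(k+x))^lam`. -/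
noncomputable def IL (n : ℕ) (k lam x : ℝ) : ℝ :=
  (∏ i ∈ Finset.range (n - 1), Real.sqrt (iterLog (i + 1) (k + x))) *
    (iterLog n (k + x)) ^ lam

/-- The factor `μ_s = exp[2(β + 2γ²/(2λ-1)) s]`. -/
noncomputable def muAux (β γ lam s : ℝ) : ℝ :=
  Real.exp (2 * (β + 2 * γ ^ 2 / (2 * lam - 1)) * s)

/-- The test function `φ(s,x) = (k+x)[1 - (ln^{(n)}(k+x))^{1-2λ}] μ_s`. -/
noncomputable def phiAux (n : ℕ) (k β γ lam s x : ℝ) : ℝ :=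
  (k + x) * (1 - (iterLog n (k + x)) ^ (1 - 2 * lam)) * muAux β γ lam s


noncomputable def towAux : ℕ → ℝ → ℝ
  | 0, t => t
  | m + 1, t => Real.exp (towAux m t)

lemma one_le_iterExp (n : ℕ) : 1 ≤ iterExp n := by
  induction n with
  | zero => simp [iterExp]
  | succ m ih =>
    have := Real.add_one_le_exp (iterExp m)
    simp only [iterExp]
    nlinarith

lemma towAux_one (n : ℕ) : towAux n 1 = iterExp n := by
  induction n with
  | zero => rfl
  | succ m ih => simp [towAux, iterExp, ih]

lemma le_towAux (n : ℕ) {M : ℝ} (hM : 1 ≤ M) : M ≤ towAux n M := by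
  induction n with
  | zero => simp [towAux]
  | succ m ih =>
    have := Real.add_one_le_exp (towAux m M)
    simp only [towAux]
    nlinarith

lemma iterExp_add_one_le_towAux (n : ℕ) {M : ℝ} (hM : 2 ≤ M) :
    iterExp n + 1 ≤ towAux n M := by
  induction n with
  | zero => simp only [towAux, iterExp]; linarith
  | succ m ih =>
    simp only [towAux, iterExp]
    have h1 : Real.exp (iterExp m + 1) ≤ Real.exp (towAux m M) := Real.exp_le_exp.2 ih
    have h2 : Real.exp (iterExp m) * Real.exp 1 = Real.exp (iterExp m + 1) := (Real.exp_add _ _).symm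
    have h3 : (2:ℝ) ≤ Real.exp 1 := by
      have := Real.add_one_le_exp 1; linarith
    have h4 : 1 ≤ Real.exp (iterExp m) := by
      rw [Real.one_le_exp_iff]
      linarith [one_le_iterExp m]
    nlinarith

lemma iterLog_towAux {i n : ℕ} (hin : i ≤ n) (M : ℝ) :
    iterLog i (towAux n M) = towAux (n - i) M := by
  induction i with
  | zero => simp [iterLog]
  | succ j ih =>
    have hj : j ≤ n := Nat.le_of_succ_le hin
    have h1 : n - j = (n - (j+1)) + 1 := by omega
    simp only [iterLog, ih hj, h1, towAux, Real.log_exp]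

lemma iterExp_le_iterLog {i n : ℕ} (hin : i ≤ n) {v : ℝ} (hv : iterExp n ≤ v) :
    iterExp (n - i) ≤ iterLog i v := by
  induction i with
  | zero => simpa [iterLog]
  | succ j ih =>
    have hj : j ≤ n := Nat.le_of_succ_le hin
    have h1 : iterExp (n - j) ≤ iterLog j v := ih hj
    have h2 : n - j = (n - (j+1)) + 1 := by omega
    have hpos : (0:ℝ) < iterExp (n - j) := by linarith [one_le_iterExp (n - j)]
    simp only [iterLog]
    calc iterExp (n - (j+1)) = Real.log (iterExp ((n - (j+1)) + 1)) := by
          simp [iterExp, Real.log_exp]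
      _ = Real.log (iterExp (n - j)) := by rw [← h2]
      _ ≤ Real.log (iterLog j v) := Real.log_le_log hpos h1

lemma one_le_iterLog {i n : ℕ} (hin : i ≤ n) {v : ℝ} (hv : iterExp n ≤ v) :
    1 ≤ iterLog i v :=
  le_trans (one_le_iterExp _) (iterExp_le_iterLog hin hv)

lemma iterLog_mono {i n : ℕ} (hin : i ≤ n) {v w : ℝ} (hv : iterExp n ≤ v) (hvw : v ≤ w) :
    iterLog i v ≤ iterLog i w := by
  induction i with
  | zero => simpa [iterLog]
  | succ j ih =>
    have hj : j ≤ n := Nat.le_of_succ_le hin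
    have h1 : (0:ℝ) < iterLog j v := lt_of_lt_of_le one_pos (one_le_iterLog hj hv)
    exact Real.log_le_log h1 (ih hj)

lemma hasDerivAt_iterLog {i n : ℕ} (hin : i ≤ n) {v : ℝ} (hv : iterExp n ≤ v) :
    HasDerivAt (iterLog i) (∏ j ∈ Finset.range i, iterLog j v)⁻¹ v := by
  induction i with
  | zero => simpa [iterLog] using hasDerivAt_id' v
  | succ j ih =>
    have hj : j ≤ n := Nat.le_of_succ_le hin
    have h1 : iterLog j v ≠ 0 := by
      have := one_le_iterLog hj hv; linarith
    have h2 := (ih hj).log h1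
    have : (∏ l ∈ Finset.range j, iterLog l v)⁻¹ / iterLog j v
        = (∏ l ∈ Finset.range (j+1), iterLog l v)⁻¹ := by
      rw [Finset.prod_range_succ, mul_inv, div_eq_mul_inv]
    rw [this] at h2
    exact h2.congr_deriv rfl

lemma one_le_finset_prod {s : Finset ℕ} {f : ℕ → ℝ} (h : ∀ i ∈ s, 1 ≤ f i) :
    1 ≤ ∏ i ∈ s, f i := by
  calc (1:ℝ) = ∏ _i ∈ s, 1 := by simp
    _ ≤ ∏ i ∈ s, f i := Finset.prod_le_prod (fun i _ => zero_le_one) h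

lemma one_le_prodQ {n m : ℕ} (hm : m ≤ n) {v : ℝ} (hv : iterExp n ≤ v) :
    1 ≤ ∏ j ∈ Finset.range m, iterLog j v :=
  one_le_finset_prod fun i hi => one_le_iterLog (le_trans (Finset.mem_range.1 hi).le hm) hv

lemma one_le_prodP {n m : ℕ} (hm : m + 1 ≤ n) {v : ℝ} (hv : iterExp n ≤ v) :
    1 ≤ ∏ i ∈ Finset.range m, iterLog (i + 1) v := by
  refine one_le_finset_prod fun i hi => ?_
  have hi' := Finset.mem_range.1 hi
  exact one_le_iterLog (n := n) (by omega) hv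

lemma prodQ_succ_eq (m : ℕ) (v : ℝ) :
    ∏ j ∈ Finset.range (m + 1), iterLog j v = v * ∏ i ∈ Finset.range m, iterLog (i + 1) v := by
  rw [Finset.prod_range_succ']
  simp [iterLog, mul_comm]

lemma L1_le_prodP {n m : ℕ} (hm1 : 1 ≤ m) (hm : m + 1 ≤ n) {v : ℝ} (hv : iterExp n ≤ v) :
    iterLog 1 v ≤ ∏ i ∈ Finset.range m, iterLog (i + 1) v := by
  have h0 : (0:ℕ) ∈ Finset.range m := Finset.mem_range.2 hm1
  rw [← Finset.mul_prod_erase _ _ h0]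
  have h1 : 1 ≤ ∏ i ∈ (Finset.range m).erase 0, iterLog (i + 1) v := by
    refine one_le_finset_prod fun i hi => ?_
    have hi' := Finset.mem_range.1 (Finset.mem_of_mem_erase hi)
    exact one_le_iterLog (n := n) (by omega) hv
  have h2 : 0 ≤ iterLog (0 + 1) v := by
    have := one_le_iterLog (n := n) (i := 1) (by omega) hv; linarith
  calc iterLog 1 v = iterLog (0 + 1) v * 1 := by norm_num
    _ ≤ iterLog (0 + 1) v * ∏ i ∈ (Finset.range m).erase 0, iterLog (i + 1) v := by
        exact mul_le_mul_of_nonneg_left h1 h2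

lemma derivP {n : ℕ} {v : ℝ} (hv : iterExp n ≤ v) (m : ℕ) (hm : m + 1 ≤ n) :
    ∃ d : ℝ, HasDerivAt (fun w => ∏ i ∈ Finset.range m, iterLog (i + 1) w) d v ∧ 0 ≤ d ∧
      d * (v * iterLog 1 v) ≤ m * ∏ i ∈ Finset.range m, iterLog (i + 1) v := by
  induction m with
  | zero =>
    exact ⟨0, by simpa using hasDerivAt_const v (1:ℝ), le_rfl, by simp⟩
  | succ p ih =>
    obtain ⟨d, hd, hd0, hdb⟩ := ih (by omega)
    have hp1 : p + 1 ≤ n := by omega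
    have hL := hasDerivAt_iterLog hp1 hv
    have hprod : HasDerivAt (fun w => (∏ i ∈ Finset.range p, iterLog (i + 1) w) * iterLog (p+1) w)
        (d * iterLog (p+1) v + (∏ i ∈ Finset.range p, iterLog (i + 1) v) *
          (∏ j ∈ Finset.range (p+1), iterLog j v)⁻¹) v := hd.mul hL
    have heq : (fun w => ∏ i ∈ Finset.range (p+1), iterLog (i + 1) w)
        = fun w => (∏ i ∈ Finset.range p, iterLog (i + 1) w) * iterLog (p+1) w := by
      funext w; rw [Finset.prod_range_succ]
    rw [← heq] at hprod
    set Pp := ∏ i ∈ Finset.range p, iterLog (i + 1) v with hPp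
    have hQ : ∏ j ∈ Finset.range (p+1), iterLog j v = v * Pp := prodQ_succ_eq p v
    -- positivity facts
    have hv1 : 1 ≤ v := le_trans (one_le_iterExp n) hv
    have hPp1 : 1 ≤ Pp := one_le_prodP (by omega) hv
    have hL1 : 1 ≤ iterLog 1 v := one_le_iterLog (by omega) hv
    have hLp : 1 ≤ iterLog (p+1) v := one_le_iterLog hp1 hv
    refine ⟨_, hprod, ?_, ?_⟩
    · have : 0 < (∏ j ∈ Finset.range (p+1), iterLog j v)⁻¹ := by
        rw [hQ]; positivity
      nlinarith
    · rw [hQ, Finset.prod_range_succ, ← hPp]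
      have hkey : Pp * (v * Pp)⁻¹ * (v * iterLog 1 v) ≤ Pp * iterLog (p+1) v := by
        have h1 : Pp * (v * Pp)⁻¹ * (v * iterLog 1 v) = iterLog 1 v := by
          field_simp
        rw [h1]
        rcases Nat.eq_zero_or_pos p with hp | hp
        · subst hp
          have : Pp = 1 := by simp [hPp]
          rw [this]
          nlinarith
        · calc iterLog 1 v ≤ Pp := L1_le_prodP hp (by omega) hv
            _ ≤ Pp * iterLog (p+1) v := by nlinarith
      have h2 : d * iterLog (p+1) v * (v * iterLog 1 v) ≤ p * Pp * iterLog (p+1) v := by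
        nlinarith
      push_cast
      nlinarith


lemma hasDerivAt_phi {n : ℕ} (hn : 2 ≤ n) (k β γ lam s u : ℝ)
    (hku : iterExp n ≤ k + u) :
    HasDerivAt (fun u' : ℝ => phiAux n k β γ lam s u')
      (muAux β γ lam s * (1 - (iterLog n (k + u)) ^ (1 - 2 * lam)
        + (2 * lam - 1) * ((iterLog n (k + u)) ^ (-(2 * lam)) /
            ∏ i ∈ Finset.range (n - 1), iterLog (i + 1) (k + u)))) u := by
  have h0 : HasDerivAt (fun u' : ℝ => k + u') 1 u := by
    simpa using (hasDerivAt_id u).const_add k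
  have hQ : (∏ j ∈ Finset.range n, iterLog j (k + u))
      = (k + u) * ∏ i ∈ Finset.range (n - 1), iterLog (i + 1) (k + u) := by
    obtain ⟨m, rfl⟩ : ∃ m, n = m + 1 := ⟨n - 1, by omega⟩
    simpa using prodQ_succ_eq m (k + u)
  have hL : HasDerivAt (fun u' : ℝ => iterLog n (k + u'))
      (((k + u) * ∏ i ∈ Finset.range (n - 1), iterLog (i + 1) (k + u))⁻¹) u := by
    have := (hasDerivAt_iterLog le_rfl hku).comp u h0
    simpa [hQ, Function.comp_def] using this
  have hLne : iterLog n (k + u) ≠ 0 := by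
    have := one_le_iterLog le_rfl hku; linarith
  have hA : HasDerivAt (fun u' : ℝ => (iterLog n (k + u')) ^ (1 - 2 * lam))
      ((((k + u) * ∏ i ∈ Finset.range (n - 1), iterLog (i + 1) (k + u))⁻¹) * (1 - 2 * lam) *
        (iterLog n (k + u)) ^ (1 - 2 * lam - 1)) u := hL.rpow_const (Or.inl hLne)
  have hinner : HasDerivAt
      (fun u' : ℝ => (k + u') * (1 - (iterLog n (k + u')) ^ (1 - 2 * lam)))
      (1 * (1 - (iterLog n (k + u)) ^ (1 - 2 * lam)) + (k + u) *
        (0 - (((k + u) * ∏ i ∈ Finset.range (n - 1), iterLog (i + 1) (k + u))⁻¹ * (1 - 2 * lam) *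
          (iterLog n (k + u)) ^ (1 - 2 * lam - 1)))) u :=
    h0.mul ((hasDerivAt_const u (1:ℝ)).sub hA)
  have hphi := hinner.mul_const (muAux β γ lam s)
  have hfun : (fun u' : ℝ => phiAux n k β γ lam s u')
      = fun u' : ℝ => ((k + u') * (1 - (iterLog n (k + u')) ^ (1 - 2 * lam))) * muAux β γ lam s := rfl
  rw [← hfun] at hphi
  refine hphi.congr_deriv ?_
  have hexp : (iterLog n (k + u)) ^ (1 - 2 * lam - 1) = (iterLog n (k + u)) ^ (-(2 * lam)) := by
    congr 1; ring
  have hkv : (k + u) ≠ 0 := by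
    have := one_le_iterExp n; intro h; rw [h] at hku; linarith
  have hP : (∏ i ∈ Finset.range (n - 1), iterLog (i + 1) (k + u)) ≠ 0 := by
    have := one_le_prodP (n := n) (m := n - 1) (by omega) hku; linarith
  rw [hexp]
  field_simp
  ring


lemma first_factor_le_prod {m : ℕ} {f : ℕ → ℝ} (hf : ∀ i ∈ Finset.range m, 1 ≤ f i)
    (hm : 0 < m) : f 0 ≤ ∏ i ∈ Finset.range m, f i := by
  have h0 : (0:ℕ) ∈ Finset.range m := Finset.mem_range.2 hm
  rw [← Finset.mul_prod_erase _ _ h0]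
  have h1 : 1 ≤ ∏ i ∈ (Finset.range m).erase 0, f i :=
    one_le_finset_prod fun i hi => hf i (Finset.mem_of_mem_erase hi)
  have h2 : 0 ≤ f 0 := le_trans zero_le_one (hf 0 h0)
  nlinarith

lemma prodQ_eq {n : ℕ} (hn : 1 ≤ n) (w : ℝ) :
    ∏ j ∈ Finset.range n, iterLog j w = w * ∏ i ∈ Finset.range (n - 1), iterLog (i + 1) w := by
  obtain ⟨m, rfl⟩ : ∃ m, n = m + 1 := ⟨n - 1, by omega⟩
  simpa using prodQ_succ_eq m w

lemma innerArith (lam L L1 Pv v dP0 n' : ℝ) (hlam : 1/2 < lam)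
    (hL : 1 ≤ L) (hL1 : 1 ≤ L1) (hPv : 1 ≤ Pv) (hL1P : L1 ≤ Pv)
    (hML1 : 2*(2*lam + n') ≤ L1) (hn' : 2 ≤ n') (hv : 0 < v)
    (hdP0 : 0 ≤ dP0) (hdb : dP0 * (v * L1) ≤ (n' - 1) * Pv) :
    2*lam + L*v*dP0 ≤ Pv*L/2 := by
  have hLPv0 : (0:ℝ) < L*Pv := mul_pos (by linarith) (by linarith)
  have hPLP : Pv ≤ L*Pv := by nlinarith
  have m2a := mul_le_mul_of_nonneg_left (le_trans hL1P hPLP) (by linarith : (0:ℝ) ≤ 2*lam)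
  have m2b := mul_le_mul_of_nonneg_left hdb (by linarith : (0:ℝ) ≤ L)
  have m3 : 2*lam*(L*Pv) + L*((n'-1)*Pv) ≤ (L1/2)*(L*Pv) := by
    have h := mul_nonneg (by linarith : (0:ℝ) ≤ L1/2 - 2*lam - (n'-1)) hLPv0.le
    nlinarith [h]
  have m4 : (2*lam + L*v*dP0) * L1 ≤ (Pv*L/2) * L1 := by nlinarith [m2a, m2b, m3]
  exact le_of_mul_le_mul_right m4 (by linarith)

lemma assemble (β γ lam μ x y v A G1x D P2 ILx ILy : ℝ)
    (hβ : 0 ≤ β) (hγ : 0 < γ) (hlam : 1/2 < lam) (hμ : 0 < μ)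
    (hx : 0 ≤ x) (hy : 0 ≤ y) (hxv : x ≤ v) (hv1 : 1 ≤ v)
    (hA0 : 0 < A) (hA2 : A ≤ 1/2)
    (hG1l : 1/2 ≤ G1x) (hG1u : G1x ≤ 1)
    (hP2 : 0 < P2)
    (hD : (2*lam-1)/(2*v*P2) ≤ D)
    (hILx : ILx^2 = P2) (hILx0 : 0 < ILx)
    (hILy0 : 0 < ILy)
    (hILxy : x ≤ y → ILx ≤ ILy)
    (hILylb : (2*lam-1)/(2*γ) ≤ ILy) :
    0 ≤ -β * (μ * G1x) * x - (μ * G1x) * (γ * y / ILy) +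
      1 / 2 * (μ * D) * y ^ 2 + 2 * (β + 2 * γ ^ 2 / (2 * lam - 1)) * (v * (1 - A)) * μ := by
  have hc2 : (0:ℝ) < 2*lam - 1 := by linarith
  have hv0 : (0:ℝ) < v := by linarith
  have hy2 : (0:ℝ) ≤ y^2 := sq_nonneg y
  have hD0 : 0 ≤ D := le_trans (by positivity) hD
  have part1 : β * (μ * G1x) * x ≤ 2*β*(v*(1-A))*μ := by
    have e1 : β * (μ * G1x) * x ≤ β * μ * x := by
      nlinarith [mul_nonneg (mul_nonneg hβ hμ.le) hx]
    have e2 : β * μ * x ≤ β * μ * v := by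
      nlinarith [mul_nonneg hβ hμ.le]
    have e3 : β * μ * v ≤ 2*β*(v*(1-A))*μ := by
      nlinarith [mul_nonneg (mul_nonneg hβ hμ.le) hv0.le]
    linarith
  set R : ℝ := γ^2*μ*v/(2*lam-1) with hRdef
  have hR0 : 0 < R := by positivity
  set B₀ : ℝ := μ*(2*lam-1)/(4*v*P2) with hB₀def
  have hB₀0 : 0 < B₀ := by positivity
  have hhalf : B₀ ≤ 1/2 * (μ * D) := by
    have h1 := mul_le_mul_of_nonneg_left hD (le_of_lt (half_pos hμ))
    have h2 : μ/2 * ((2*lam-1)/(2*v*P2)) = B₀ := by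
      rw [hB₀def]; field_simp; ring
    linarith [h1, h2]
  have key : μ * (γ * y / ILy) ≤ B₀ * y^2 + 2*R := by
    rcases le_total y x with hyx | hxy
    · have h1 : γ * y / ILy ≤ 2*γ^2*v/(2*lam-1) := by
        rw [div_le_div_iff₀ hILy0 hc2]
        have e1 : 2*γ^2*v * ((2*lam-1)/(2*γ)) = γ*(2*lam-1)*v := by field_simp
        have e2 := mul_le_mul_of_nonneg_left hILylb (by positivity : (0:ℝ) ≤ 2*γ^2*v)
        have e3 : γ * y * (2*lam-1) ≤ γ * (2*lam-1) * v := by nlinarith [mul_pos hγ hc2]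
        linarith
      have h2 : μ * (γ * y / ILy) ≤ μ * (2*γ^2*v/(2*lam-1)) :=
        mul_le_mul_of_nonneg_left h1 hμ.le
      have h3 : μ * (2*γ^2*v/(2*lam-1)) = 2*R := by rw [hRdef]; ring
      nlinarith [mul_nonneg hB₀0.le hy2]
    · have hIL := hILxy hxy
      have h1 : μ * (γ * y / ILy) ≤ μ * γ * y / ILx := by
        have e : μ * (γ * y / ILy) = μ * γ * y / ILy := by ring
        rw [e]
        exact div_le_div_of_nonneg_left (by positivity) hILx0 hIL
      have h2 : μ * γ * y / ILx ≤ B₀ * y^2 + R := by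
        rw [div_le_iff₀ hILx0]
        have hsq := sq_nonneg (2*B₀*ILx*y - γ*μ)
        have hE2 : 4*B₀*ILx^2*R = γ^2*μ^2 := by
          rw [hILx, hB₀def, hRdef]
          field_simp
        nlinarith [hsq, hE2, mul_pos hB₀0 hILx0, mul_pos (mul_pos hB₀0 hILx0) hILx0]
      linarith
  have final2 : (μ * G1x) * (γ * y / ILy) ≤ 1/2 * (μ * D) * y^2 + 2*R := by
    have h0 : 0 ≤ γ * y / ILy := by positivity
    have h1 : (μ * G1x) * (γ * y / ILy) ≤ μ * (γ * y / ILy) := by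
      nlinarith [mul_nonneg hμ.le h0]
    have h2 : B₀ * y^2 ≤ 1/2 * (μ * D) * y^2 := mul_le_mul_of_nonneg_right hhalf hy2
    linarith
  have hlast : 2*R ≤ 4*γ^2/(2*lam-1)*(v*(1-A))*μ := by
    have h1 : 4*γ^2/(2*lam-1)*(v*(1-A))*μ = 4*(1-A)*R := by rw [hRdef]; ring
    nlinarith
  have hfs : 2 * (β + 2*γ^2/(2*lam-1)) * (v*(1-A)) * μ
      = 2*β*(v*(1-A))*μ + 4*γ^2/(2*lam-1)*(v*(1-A))*μ := by ring
  linarith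


/-- Proposition 3.4: the test-function inequality (3.24), for all sufficiently
large `k ≥ e^{(n)}` depending only on `(n, λ, γ)`: for all `(s,x,z)`,
`-β φ_x x - φ_x γ|z| / IL_{n,k}^λ(|z|) + ½ φ_{xx} |z|² + φ_s ≥ 0`. -/
theorem stmt_11 (n : ℕ) (hn : 2 ≤ n) (d : ℕ) (lam β γ T : ℝ) (hlam : 1 / 2 < lam)
    (hβ : 0 ≤ β) (hγ : 0 < γ) (hT : 0 < T) :
    ∃ k₀ : ℝ, iterExp n ≤ k₀ ∧ ∀ k : ℝ, k₀ ≤ k →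
      ∀ s ∈ Set.Icc (0 : ℝ) T, ∀ x : ℝ, 0 ≤ x →
        ∀ z : EuclideanSpace ℝ (Fin d),
          0 ≤ -β * deriv (fun u : ℝ => phiAux n k β γ lam s u) x * x -
              deriv (fun u : ℝ => phiAux n k β γ lam s u) x *
                (γ * ‖z‖ / IL n k lam ‖z‖) +
              (1 / 2) * deriv (deriv (fun u : ℝ => phiAux n k β γ lam s u)) x *
                ‖z‖ ^ 2 +
              deriv (fun t : ℝ => phiAux n k β γ lam t x) s := by
  have hc2 : (0:ℝ) < 2 * lam - 1 := by linarith
  set M : ℝ := 2 + max ((2:ℝ) ^ ((1:ℝ)/(2*lam-1)))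
      (max (2*(2*lam + n)) (((2*lam-1)/(2*γ))^2)) with hM
  have hmax0 : (0:ℝ) ≤ max ((2:ℝ) ^ ((1:ℝ)/(2*lam-1)))
      (max (2*(2*lam + n)) (((2*lam-1)/(2*γ))^2)) :=
    le_trans (Real.rpow_pos_of_pos two_pos _).le (le_max_left _ _)
  have hM2 : 2 ≤ M := by rw [hM]; linarith
  refine ⟨towAux n M, by linarith [iterExp_add_one_le_towAux n hM2], ?_⟩
  intro k hk s hs x hx z
  have hkE : iterExp n + 1 ≤ k := le_trans (iterExp_add_one_le_towAux n hM2) hk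
  have hlogM : ∀ i, i ≤ n → ∀ w : ℝ, k ≤ w → M ≤ iterLog i w := by
    intro i hi w hw
    have hE : iterExp n ≤ towAux n M := by linarith [iterExp_add_one_le_towAux n hM2]
    calc M ≤ towAux (n - i) M := le_towAux _ (by linarith)
      _ = iterLog i (towAux n M) := (iterLog_towAux hi M).symm
      _ ≤ iterLog i k := iterLog_mono hi hE hk
      _ ≤ iterLog i w := iterLog_mono hi (by linarith) hw
  have hy0 : 0 ≤ ‖z‖ := norm_nonneg z
  have hv : iterExp n ≤ k + x := by linarith
  have hkv : k ≤ k + x := by linarith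
  -- constant bounds before abbreviations
  have hML1 : 2*(2*lam + n) ≤ iterLog 1 (k + x) := by
    have h1 := hlogM 1 (by omega) (k + x) hkv
    have h2 := le_max_left (2*(2*lam + (n:ℝ))) (((2*lam-1)/(2*γ))^2)
    have h3 := le_max_right ((2:ℝ) ^ ((1:ℝ)/(2*lam-1)))
      (max (2*(2*lam + (n:ℝ))) (((2*lam-1)/(2*γ))^2))
    rw [hM] at h1
    linarith
  have hML : (2:ℝ) ^ ((1:ℝ)/(2*lam-1)) ≤ iterLog n (k + x) := by
    have h1 := hlogM n le_rfl (k + x) hkv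
    have h2 := le_max_left ((2:ℝ) ^ ((1:ℝ)/(2*lam-1)))
      (max (2*(2*lam + (n:ℝ))) (((2*lam-1)/(2*γ))^2))
    rw [hM] at h1
    linarith
  set y : ℝ := ‖z‖ with hy
  set L : ℝ := iterLog n (k + x) with hLdef
  set L1 : ℝ := iterLog 1 (k + x) with hL1def
  set Pv : ℝ := ∏ i ∈ Finset.range (n - 1), iterLog (i + 1) (k + x) with hPdef
  set A : ℝ := L ^ (1 - 2 * lam) with hAdef
  set Bv : ℝ := L ^ (-(2 * lam)) with hBdef
  set μ : ℝ := muAux β γ lam s with hμdef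
  have hμ : 0 < μ := Real.exp_pos _
  have hL1le : 1 ≤ L := one_le_iterLog le_rfl hv
  have hL11 : 1 ≤ L1 := one_le_iterLog (by omega) hv
  have hPv1 : 1 ≤ Pv := one_le_prodP (n := n) (m := n - 1) (by omega) hv
  have hL1P : L1 ≤ Pv := L1_le_prodP (by omega) (by omega) hv
  have hv1 : (1:ℝ) ≤ k + x := le_trans (one_le_iterExp n) hv
  have hL0 : (0:ℝ) < L := by linarith
  have hPv0 : (0:ℝ) < Pv := by linarith
  have hA0 : 0 < A := Real.rpow_pos_of_pos hL0 _
  have hBv0 : 0 < Bv := Real.rpow_pos_of_pos hL0 _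
  have hL2l : (0:ℝ) < L ^ (2*lam) := Real.rpow_pos_of_pos hL0 _
  have hA2 : A ≤ 1/2 := by
    have h2 : (2:ℝ) ≤ L ^ (2*lam-1) := by
      have h3 : ((2:ℝ) ^ ((1:ℝ)/(2*lam-1))) ^ (2*lam-1) ≤ L ^ (2*lam-1) :=
        Real.rpow_le_rpow (Real.rpow_pos_of_pos two_pos _).le hML hc2.le
      rwa [← Real.rpow_mul (by norm_num : (0:ℝ) ≤ 2), one_div,
        inv_mul_cancel₀ (by linarith : 2*lam-1 ≠ 0), Real.rpow_one] at h3
    have h4 : A = (L ^ (2*lam-1))⁻¹ := by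
      rw [hAdef, ← Real.rpow_neg hL0.le]
      congr 1; ring
    rw [h4, inv_le_comm₀ (by linarith) (by norm_num)]
    linarith
  have hBA : Bv ≤ A := by
    have h1 : A = L * Bv := by
      rw [hAdef, hBdef, show (1 - 2*lam) = 1 + -(2*lam) by ring, Real.rpow_add hL0,
        Real.rpow_one]
    nlinarith
  have hBL : Bv * L ^ (2*lam) = 1 := by
    rw [hBdef, ← Real.rpow_add hL0]
    simp
  -- first space derivative
  have hD1 : deriv (fun u : ℝ => phiAux n k β γ lam s u) x
      = μ * (1 - A + (2*lam - 1) * (Bv / Pv)) :=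
    (hasDerivAt_phi hn k β γ lam s x hv).deriv
  set G1x : ℝ := 1 - A + (2*lam - 1) * (Bv / Pv) with hG1def
  have hn2 : (2:ℝ) ≤ (n:ℝ) := by exact_mod_cast hn
  have hG1u : G1x ≤ 1 := by
    have h2 : (2*lam-1) * (Bv / Pv) ≤ Bv := by
      have e : (2*lam-1) * (Bv/Pv) = ((2*lam-1) * Bv)/Pv := by ring
      rw [e, div_le_iff₀ hPv0]
      nlinarith [hBv0, hL1P, hML1]
    rw [hG1def]; linarith [hBA]
  have hG1l : 1/2 ≤ G1x := by
    have : 0 ≤ (2*lam - 1) * (Bv / Pv) := by positivity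
    rw [hG1def]; linarith
  -- second space derivative
  obtain ⟨dP0, hdP0, hdP0nn, hdP0b⟩ := derivP hv (n - 1) (by omega)
  have h0x : HasDerivAt (fun u' : ℝ => k + u') 1 x := by
    simpa using (hasDerivAt_id x).const_add k
  have hdP : HasDerivAt (fun u : ℝ => ∏ i ∈ Finset.range (n - 1), iterLog (i + 1) (k + u))
      dP0 x := by
    have := hdP0.comp x h0x
    simpa [Function.comp_def] using this
  have hQx : ∏ j ∈ Finset.range n, iterLog j (k + x) = (k + x) * Pv := by
    rw [hPdef]; exact prodQ_eq (by omega) (k + x)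
  have hL' : HasDerivAt (fun u : ℝ => iterLog n (k + u)) (((k + x) * Pv)⁻¹) x := by
    have := (hasDerivAt_iterLog le_rfl hv).comp x h0x
    rw [hQx] at this
    simpa [Function.comp_def] using this
  have hLne : L ≠ 0 := by linarith
  have hBder : HasDerivAt (fun u : ℝ => (iterLog n (k + u)) ^ (-(2*lam)))
      (((k + x) * Pv)⁻¹ * (-(2*lam)) * L ^ (-(2*lam) - 1)) x :=
    hL'.rpow_const (Or.inl hLne)
  have hAder : HasDerivAt (fun u : ℝ => (iterLog n (k + u)) ^ (1 - 2*lam))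
      (((k + x) * Pv)⁻¹ * (1 - 2*lam) * L ^ (1 - 2*lam - 1)) x :=
    hL'.rpow_const (Or.inl hLne)
  have hPne : Pv ≠ 0 := by linarith
  have hdiv : HasDerivAt (fun u : ℝ => (iterLog n (k + u)) ^ (-(2*lam)) /
      ∏ i ∈ Finset.range (n - 1), iterLog (i + 1) (k + u))
      (((((k + x) * Pv)⁻¹ * (-(2*lam)) * L ^ (-(2*lam) - 1)) * Pv - Bv * dP0) / Pv^2) x :=
    hBder.div hdP hPne
  set D : ℝ := (0 - ((k + x) * Pv)⁻¹ * (1 - 2*lam) * L ^ (1 - 2*lam - 1)) +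
      (2*lam - 1) * (((((k + x) * Pv)⁻¹ * (-(2*lam)) * L ^ (-(2*lam) - 1)) * Pv - Bv * dP0) / Pv^2)
    with hDdef
  have hG1der : HasDerivAt (fun u : ℝ => 1 - (iterLog n (k + u)) ^ (1 - 2*lam) +
      (2*lam - 1) * ((iterLog n (k + u)) ^ (-(2*lam)) /
        ∏ i ∈ Finset.range (n - 1), iterLog (i + 1) (k + u))) D x :=
    (((hasDerivAt_const x (1:ℝ)).sub hAder).add (hdiv.const_mul (2*lam - 1)))
  have hEv : (deriv fun u : ℝ => phiAux n k β γ lam s u) =ᶠ[nhds x]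
      fun u : ℝ => muAux β γ lam s * (1 - (iterLog n (k + u)) ^ (1 - 2*lam) +
        (2*lam - 1) * ((iterLog n (k + u)) ^ (-(2*lam)) /
          ∏ i ∈ Finset.range (n - 1), iterLog (i + 1) (k + u))) := by
    filter_upwards [Ioi_mem_nhds (show x - 1 < x by linarith)] with u hu
    have hu' : iterExp n ≤ k + u := by
      have : x - 1 < u := hu
      linarith
    exact (hasDerivAt_phi hn k β γ lam s u hu').deriv
  have hD2 : deriv (deriv fun u : ℝ => phiAux n k β γ lam s u) x = μ * D := by
    rw [hEv.deriv_eq]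
    exact (hG1der.const_mul (muAux β γ lam s)).deriv
  -- lower bound on D
  have hv0 : (0:ℝ) < k + x := by linarith
  have hvne : (k + x) ≠ 0 := by linarith
  have hDlb : (2*lam-1)/(2*(k + x)*(Pv * L ^ (2*lam))) ≤ D := by
    have hexp1 : L ^ (1 - 2*lam - 1) = Bv := by rw [hBdef]; congr 1; ring
    have hexp2 : L ^ (-(2*lam) - 1) = Bv / L := by
      rw [hBdef, show -(2*lam) - 1 = -(2*lam) + (-1) by ring, Real.rpow_add hL0,
        Real.rpow_neg_one]
      ring
    have hBvinv : Bv = (L ^ (2*lam))⁻¹ := by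
      field_simp [← hBL]
      exact hBL
    set W : ℝ := (k + x) * Pv^2 * L with hWdef
    have hW0 : 0 < W := by positivity
    have hDW : D * W = (2*lam-1) * Bv * (Pv * L - 2*lam - L * (k + x) * dP0) := by
      rw [hDdef, hexp1, hexp2, hWdef]
      field_simp
      ring
    have hRW : ((2*lam-1)/(2*(k + x)*(Pv * L ^ (2*lam)))) * W
        = (2*lam-1) * Bv * (Pv * L / 2) := by
      rw [hBvinv, hWdef]
      field_simp
    rw [← hL1def, ← hPdef] at hdP0b
    have hcast : ((n - 1 : ℕ) : ℝ) = (n:ℝ) - 1 := by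
      have h1 : 1 ≤ n := by omega
      push_cast [Nat.cast_sub h1]
      ring
    rw [hcast] at hdP0b
    have hinner : 2*lam + L*(k + x)*dP0 ≤ Pv*L/2 :=
      innerArith lam L L1 Pv (k + x) dP0 (n:ℝ) hlam hL1le hL11 hPv1 hL1P hML1 hn2 hv0
        hdP0nn hdP0b
    have hfinal : (2*lam-1) * Bv * (Pv * L / 2)
        ≤ (2*lam-1) * Bv * (Pv * L - 2*lam - L*(k + x)*dP0) := by
      have h := mul_le_mul_of_nonneg_left
        (by linarith : Pv*L/2 ≤ Pv*L - 2*lam - L*(k + x)*dP0)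
        (by positivity : (0:ℝ) ≤ (2*lam-1)*Bv)
      linarith [h]
    have hmono : ((2*lam-1)/(2*(k + x)*(Pv * L ^ (2*lam)))) * W ≤ D * W := by
      rw [hDW, hRW]; exact hfinal
    exact le_of_mul_le_mul_right hmono hW0
  -- time derivative
  have hDs : deriv (fun t : ℝ => phiAux n k β γ lam t x) s
      = 2 * (β + 2 * γ ^ 2 / (2 * lam - 1)) * ((k + x) * (1 - A)) * μ := by
    have hfun : (fun t : ℝ => phiAux n k β γ lam t x)
        = fun t : ℝ => ((k + x) * (1 - A)) * Real.exp (2 * (β + 2*γ^2/(2*lam-1)) * t) := by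
      funext t
      simp only [phiAux, muAux, hAdef, hLdef]
    rw [hfun]
    have hd : HasDerivAt
        (fun t : ℝ => ((k + x) * (1 - A)) * Real.exp (2 * (β + 2*γ^2/(2*lam-1)) * t))
        (((k + x) * (1 - A)) * (Real.exp (2 * (β + 2*γ^2/(2*lam-1)) * s) *
          (2 * (β + 2*γ^2/(2*lam-1)) * 1))) s :=
      (((hasDerivAt_id s).const_mul (2 * (β + 2*γ^2/(2*lam-1)))).exp).const_mul _
    rw [hd.deriv, hμdef]
    simp only [muAux]
    ring
  -- IL facts
  have hILx_eq : IL n k lam x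
      = (∏ i ∈ Finset.range (n-1), Real.sqrt (iterLog (i+1) (k + x))) * L ^ lam := by
    rw [IL, hLdef]
  have hILx_sq : (IL n k lam x)^2 = Pv * L ^ (2*lam) := by
    rw [hILx_eq, mul_pow, ← Finset.prod_pow]
    congr 1
    · rw [hPdef]
      refine Finset.prod_congr rfl fun i hi => ?_
      refine Real.sq_sqrt ?_
      have hi' := Finset.mem_range.1 hi
      linarith [one_le_iterLog (n := n) (i := i+1) (by omega) hv]
    · rw [← Real.rpow_natCast (L ^ lam) 2, ← Real.rpow_mul hL0.le]
      congr 1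
      push_cast; ring
  have hILx0 : 0 < IL n k lam x := by
    rw [hILx_eq]
    refine mul_pos (Finset.prod_pos fun i hi => Real.sqrt_pos.2 ?_) (Real.rpow_pos_of_pos hL0 _)
    have hi' := Finset.mem_range.1 hi
    linarith [one_le_iterLog (n := n) (i := i+1) (by omega) hv]
  have hIL_mono : x ≤ y → IL n k lam x ≤ IL n k lam y := by
    intro hxy
    rw [IL, IL]
    refine mul_le_mul ?_ ?_ ?_ ?_
    · refine Finset.prod_le_prod (fun i _ => Real.sqrt_nonneg _) fun i hi => ?_
      have hi' := Finset.mem_range.1 hi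
      exact Real.sqrt_le_sqrt (iterLog_mono (n := n) (by omega) hv (by linarith))
    · refine Real.rpow_le_rpow ?_ (iterLog_mono le_rfl hv (by linarith)) (by linarith)
      linarith [one_le_iterLog (n := n) le_rfl hv]
    · exact Real.rpow_nonneg (by linarith [one_le_iterLog (n := n) le_rfl hv]) _
    · exact Finset.prod_nonneg fun i _ => Real.sqrt_nonneg _
  have hILy_lb : (2*lam-1)/(2*γ) ≤ IL n k lam y := by
    have hvy : iterExp n ≤ k + y := by linarith [one_le_iterExp n, hkE]
    have hkvy : k ≤ k + y := by linarith
    have hMg : ((2*lam-1)/(2*γ))^2 ≤ iterLog 1 (k + y) := by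
      have h1 := hlogM 1 (by omega) (k + y) hkvy
      have h2 := le_max_right (2*(2*lam + (n:ℝ))) (((2*lam-1)/(2*γ))^2)
      have h3 := le_max_right ((2:ℝ) ^ ((1:ℝ)/(2*lam-1)))
        (max (2*(2*lam + (n:ℝ))) (((2*lam-1)/(2*γ))^2))
      rw [hM] at h1
      linarith
    have h1 : Real.sqrt (iterLog 1 (k + y))
        ≤ ∏ i ∈ Finset.range (n-1), Real.sqrt (iterLog (i+1) (k + y)) := by
      have := first_factor_le_prod (f := fun i => Real.sqrt (iterLog (i+1) (k + y)))
        (m := n-1) (fun i hi => by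
          have hi' := Finset.mem_range.1 hi
          refine Real.one_le_sqrt.2 ?_
          exact one_le_iterLog (n := n) (by omega) hvy) (by omega)
      simpa using this
    have h2 : 1 ≤ (iterLog n (k + y)) ^ lam :=
      Real.one_le_rpow (one_le_iterLog le_rfl hvy) (by linarith)
    have h3 : (2*lam-1)/(2*γ) ≤ Real.sqrt (iterLog 1 (k + y)) := by
      calc (2*lam-1)/(2*γ) = Real.sqrt (((2*lam-1)/(2*γ))^2) :=
            (Real.sqrt_sq (by positivity)).symm
        _ ≤ _ := Real.sqrt_le_sqrt hMg
    rw [IL]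
    calc (2*lam-1)/(2*γ) ≤ Real.sqrt (iterLog 1 (k + y)) := h3
      _ = Real.sqrt (iterLog 1 (k + y)) * 1 := (mul_one _).symm
      _ ≤ _ := mul_le_mul h1 h2 zero_le_one (le_trans (Real.sqrt_nonneg _) h1)
  have hILy0 : 0 < IL n k lam y := lt_of_lt_of_le (by positivity) hILy_lb
  rw [hD1, hD2, hDs]
  exact assemble β γ lam μ x y (k + x) A G1x D (Pv * L ^ (2*lam)) (IL n k lam x)
    (IL n k lam y) hβ hγ hlam hμ hx hy0 (by linarith [one_le_iterExp n, hkE]) hv1 hA0 hA2 hG1l hG1u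
    (by positivity) hDlb hILx_sq hILx0 hILy0 hIL_mono hILy_lb
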